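/- arXiv:2508.09235 — 2 statements merged into one kernel-verified Lean document; each statement's English description precedes it below -/
import Mathlib

section
/- Let γ_d, γ_r : [0,1] → ℝ be affine functions. Define E₁ = {t ∈ [0,1] : γ_d(t) > |γ_r(t)|} and E₂ = {t ∈ [0,1] : γ_r(t) > |γ_d(t)|}. If E₁ and E₂ are both nonempty, then the closures of E₁ and E₂ intersect. -/
lemma aff_comb (φ : ℝ →ᵃ[ℝ] ℝ) (c a s : ℝ) :
    φ (c + s * (a - c)) = φ c + s * (φ a - φ c) := by
  have h := φ.apply_lineMap c a s
  have h1 : (AffineMap.lineMap c a : ℝ →ᵃ[ℝ] ℝ) s = c + s * (a - c) := by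
    simp [AffineMap.lineMap_apply, smul_eq_mul]; ring
  have h2 : (AffineMap.lineMap (φ c) (φ a) : ℝ →ᵃ[ℝ] ℝ) s = φ c + s * (φ a - φ c) := by
    simp [AffineMap.lineMap_apply, smul_eq_mul]; ring
  rw [h1, h2] at h
  exact h

lemma aux_closure (φ ψ : ℝ →ᵃ[ℝ] ℝ) (c a : ℝ)
    (hc0 : 0 ≤ c) (hc1 : c ≤ 1) (ha0 : 0 ≤ a) (ha1 : a ≤ 1)
    (hFc : φ c = ψ c) (hGc : 0 < φ c + ψ c)
    (hFa : ψ a < φ a) (hGa : 0 < φ a + ψ a) :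
    c ∈ closure {t ∈ Set.Icc (0:ℝ) 1 | |ψ t| < φ t} := by
  rw [mem_closure_iff_seq_limit]
  refine ⟨fun n => c + (1 / (n + 1 : ℝ)) * (a - c), fun n => ?_, ?_⟩
  · have hs0 : 0 < (1 / (n + 1 : ℝ)) := by positivity
    have hs1 : (1 / (n + 1 : ℝ)) ≤ 1 := by
      rw [div_le_one (by positivity)]
      have : (0:ℝ) ≤ n := Nat.cast_nonneg n
      linarith
    set s : ℝ := 1 / (n + 1 : ℝ)
    have hφ := aff_comb φ c a s
    have hψ := aff_comb ψ c a s
    refine ⟨⟨by nlinarith, by nlinarith⟩, ?_⟩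
    rw [abs_lt]
    constructor
    · rw [hφ, hψ]
      nlinarith [mul_pos hs0 hGa]
    · rw [hφ, hψ]
      nlinarith [mul_pos hs0 (sub_pos.2 hFa)]
  · have h1 : Filter.Tendsto (fun n : ℕ => (1 / (n + 1 : ℝ))) Filter.atTop (nhds 0) :=
      tendsto_one_div_add_atTop_nhds_zero_nat
    have h2 := (h1.mul_const (a - c)).const_add c
    simpa using h2

theorem affine_dominance_regions_border
    (γd γr : ℝ →ᵃ[ℝ] ℝ) :
    ({t ∈ Set.Icc (0:ℝ) 1 | |γr t| < γd t}).Nonempty →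
    ({t ∈ Set.Icc (0:ℝ) 1 | |γd t| < γr t}).Nonempty →
    (closure {t ∈ Set.Icc (0:ℝ) 1 | |γr t| < γd t} ∩
      closure {t ∈ Set.Icc (0:ℝ) 1 | |γd t| < γr t}).Nonempty := by
  rintro ⟨a, ⟨ha0, ha1⟩, hA⟩ ⟨b, ⟨hb0, hb1⟩, hB⟩
  obtain ⟨hA1, hA2⟩ := abs_lt.1 hA
  obtain ⟨hB1, hB2⟩ := abs_lt.1 hB
  -- F = γd - γr : F a > 0, F b < 0
  have hcont : Continuous fun x : ℝ => γd x - γr x := by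
    have h1 : Continuous (γd : ℝ → ℝ) := γd.continuous_of_finiteDimensional
    have h2 : Continuous (γr : ℝ → ℝ) := γr.continuous_of_finiteDimensional
    exact h1.sub h2
  have hmem : (0:ℝ) ∈ Set.uIcc (γd a - γr a) (γd b - γr b) :=
    Set.mem_uIcc.2 (Or.inr ⟨by linarith, by linarith⟩)
  obtain ⟨c, hcmem, hFc⟩ := intermediate_value_uIcc hcont.continuousOn hmem
  -- c as a convex combination of a and b
  rw [← segment_eq_uIcc] at hcmem
  obtain ⟨x, y, hx, hy, hxy, hz⟩ := hcmem
  simp only [smul_eq_mul] at hz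
  have hceq : c = a + y * (b - a) := by nlinarith
  have hφc := aff_comb γd a b y
  have hψc := aff_comb γr a b y
  rw [← hceq] at hφc hψc
  have hFc' : γd c = γr c := by
    have : γd c - γr c = 0 := hFc
    linarith
  have hGc : 0 < γd c + γr c := by
    rw [hφc, hψc]
    have hy1 : y ≤ 1 := by linarith
    nlinarith [mul_nonneg hy (show (0:ℝ) ≤ γd b + γr b by linarith),
      mul_nonneg (show (0:ℝ) ≤ 1 - y by linarith) (show (0:ℝ) ≤ γd a + γr a by linarith)]
  have hc0 : 0 ≤ c := by nlinarith
  have hc1 : c ≤ 1 := by nlinarith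
  refine ⟨c, ?_, ?_⟩
  · exact aux_closure γd γr c a hc0 hc1 ha0 ha1 hFc' hGc hA2 (by linarith)
  · exact aux_closure γr γd c b hc0 hc1 hb0 hb1 hFc'.symm (by linarith) hB2 (by linarith)
end

section
/- Let γ_d, γ_r : [0,1] → ℝ be affine. Then at least one of the following four sets is empty: {t : γ_d(t) > |γ_r(t)|}, {t : -γ_d(t) > |γ_r(t)|}, {t : γ_r(t) > |γ_d(t)|}, {t : -γ_r(t) > |γ_d(t)|}. -/
private lemma affine_eval (h : ℝ →ᵃ[ℝ] ℝ) (t : ℝ) :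
    h t = h 0 + t * h.linear 1 := by
  have hv := h.linearMap_vsub t 0
  simp only [vsub_eq_sub, sub_zero] at hv
  have h1 : (t : ℝ) = t • (1 : ℝ) := by simp
  have : h.linear t = t * h.linear 1 := by
    nth_rewrite 1 [h1]
    rw [h.linear.map_smul]; simp [smul_eq_mul]
  linarith [hv, this]

theorem not_all_four_regions_nonempty
    (γd γr : ℝ →ᵃ[ℝ] ℝ) :
    {t ∈ Set.Icc (0:ℝ) 1 | |γr t| < γd t} = ∅ ∨
    {t ∈ Set.Icc (0:ℝ) 1 | |γr t| < -γd t} = ∅ ∨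
    {t ∈ Set.Icc (0:ℝ) 1 | |γd t| < γr t} = ∅ ∨
    {t ∈ Set.Icc (0:ℝ) 1 | |γd t| < -γr t} = ∅ := by
  by_contra h
  push_neg at h
  obtain ⟨h1, h2, h3, h4⟩ := h
  obtain ⟨t1, -, a1⟩ := h1
  obtain ⟨t2, -, a2⟩ := h2
  obtain ⟨t3, -, a3⟩ := h3
  obtain ⟨t4, -, a4⟩ := h4
  rw [abs_lt] at a1 a2 a3 a4
  obtain ⟨a1l, a1r⟩ := a1
  obtain ⟨a2l, a2r⟩ := a2
  obtain ⟨a3l, a3r⟩ := a3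
  obtain ⟨a4l, a4r⟩ := a4
  set cd := γd 0 with hcd
  set ad := γd.linear 1 with had
  set cr := γr 0 with hcr
  set ar := γr.linear 1 with har
  rw [affine_eval γd t1, affine_eval γr t1] at a1l a1r
  rw [affine_eval γd t2, affine_eval γr t2] at a2l a2r
  rw [affine_eval γd t3, affine_eval γr t3] at a3l a3r
  rw [affine_eval γd t4, affine_eval γr t4] at a4l a4r
  set m := ad - ar with hm
  set n := ad + ar with hn
  have P1 : (t1 - t2) * m > 0 := by simp only [hm]; nlinarith
  have P2 : (t1 - t2) * n > 0 := by simp only [hn]; nlinarith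
  have P3 : (t4 - t3) * m > 0 := by simp only [hm]; nlinarith
  have P4 : (t3 - t4) * n > 0 := by simp only [hn]; nlinarith
  have Q1 : m * n > 0 := by nlinarith [mul_pos P1 P2, sq_nonneg (t1 - t2)]
  have Q2 : m * n < 0 := by nlinarith [mul_pos P3 P4, sq_nonneg (t4 - t3)]
  linarith
end
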